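/- Suppose n = 2 and |A| = 2. Then there exists a feasible family attaining the supremum of the single-type problem consisting of at most two posteriors {η^s, η^t} (with weights φ_s, φ_t ≥ 0, φ_s·η^s + φ_t·η^t = θ) such that η^s is a point mass, i.e., η^s = (1,0) or η^s = (0,1); in particular C(η^s) = 0, so under the corresponding optimal advertising rule the buyer learns the state exactly upon receiving signal s and is charged price p_s = 0. -/

import Mathlib

/-!
With two actions the cost of uncertainty is a tent `min (a η₀) (b η₁)`, and the likelihood
ratio is affine, so in the coordinate `x = η₀` the objective is
`g x = (p x + q (1 - x)) · min (a x) (b (1 - x))`, which vanishes at both endpoints. Since the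
weights sum to one and average to `θ₀`, the value of the problem is the concave envelope of
`g` at `θ₀`, and it is attained by any family touching a supporting line of `g` at `θ₀`.
When `q ≤ p`, `g` is convex on its rising branch and concave on its falling one: either the
tangent to the falling branch at `θ₀` supports `g`, or the chord from the endpoint `0` to
the kink does. The case `p ≤ q` follows by the reflection `x ↦ 1 - x`.
-/

open Finset
open scoped Classical

noncomputable section

/-- The probability simplex in `ℝ^n`. -/
def simplex (n : ℕ) : Set (Fin n → ℝ) :=
  {η | (∀ ω, 0 ≤ η ω) ∧ ∑ ω, η ω = 1}

variable {A : Type*} [Fintype A] [Nonempty A]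

/-- `u*(ω) = max_{a ∈ A} u(ω, a)`. -/
def uStar (u : Fin 2 → A → ℝ) (ω : Fin 2) : ℝ :=
  Finset.univ.sup' Finset.univ_nonempty (u ω)

/-- The cost of uncertainty `C(η)`. -/
def Cost (u : Fin 2 → A → ℝ) (η : Fin 2 → ℝ) : ℝ :=
  ∑ ω, η ω * uStar u ω
    - Finset.univ.sup' Finset.univ_nonempty (fun a => ∑ ω, η ω * u ω a)

/-- The likelihood ratio `R(η) = Σ_ω μ_ω η_ω / θ_ω`. -/
def Ratio (μ θ η : Fin 2 → ℝ) : ℝ := ∑ ω, μ ω * η ω / θ ω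

/-- The set of feasible objective values of the single-type problem. -/
def ConcaveSet (u : Fin 2 → A → ℝ) (μ θ : Fin 2 → ℝ) : Set ℝ :=
  {v | ∃ (m : ℕ) (φ : Fin m → ℝ) (η : Fin m → Fin 2 → ℝ),
    (∀ s, 0 ≤ φ s) ∧ (∀ s, η s ∈ simplex 2) ∧
    (∀ ω, ∑ s, φ s * η s ω = θ ω) ∧
    v = ∑ s, φ s * Ratio μ θ (η s) * Cost u (η s)}

lemma simplex_two_one {η : Fin 2 → ℝ} (hη : η ∈ simplex 2) : η 1 = 1 - η 0 := by
  have h := hη.2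
  rw [Fin.sum_univ_two] at h
  linarith

lemma simplex_two_zero_mem_Icc {η : Fin 2 → ℝ} (hη : η ∈ simplex 2) : η 0 ∈ Set.Icc 0 1 :=
  ⟨hη.1 0, by linarith [simplex_two_one hη, hη.1 1]⟩

lemma vec_mem_simplex_two {x : ℝ} (hx : x ∈ Set.Icc 0 1) : ![x, 1 - x] ∈ simplex 2 :=
  ⟨Fin.forall_fin_two.2 ⟨hx.1, sub_nonneg.2 hx.2⟩, by simp⟩

lemma sum_weights_eq_one {n : ℕ} {ι : Type*} [Fintype ι] {θ : Fin n → ℝ} {φ : ι → ℝ}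
    {η : ι → Fin n → ℝ} (hη : ∀ s, η s ∈ simplex n) (hθ : θ ∈ simplex n)
    (hφη : ∀ ω, ∑ s, φ s * η s ω = θ ω) : ∑ s, φ s = 1 :=
  calc ∑ s, φ s = ∑ s, ∑ ω, φ s * η s ω := by simp_rw [← Finset.mul_sum, (hη _).2, mul_one]
    _ = ∑ ω, θ ω := by rw [Finset.sum_comm]; exact sum_congr rfl fun ω _ => hφη ω
    _ = 1 := hθ.2

lemma sum_mul_le_of_le_affine {ι : Type*} (s : Finset ι) {φ x : ι → ℝ} {f : ℝ → ℝ}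
    {S : Set ℝ} {c β t : ℝ} (hf : ∀ y ∈ S, f y ≤ c + β * (y - t))
    (hφ : ∀ i ∈ s, 0 ≤ φ i) (hx : ∀ i ∈ s, x i ∈ S)
    (hφ1 : ∑ i ∈ s, φ i = 1) (hφx : ∑ i ∈ s, φ i * x i = t) :
    ∑ i ∈ s, φ i * f (x i) ≤ c :=
  calc ∑ i ∈ s, φ i * f (x i) ≤ ∑ i ∈ s, (c * φ i + β * (φ i * x i - t * φ i)) :=
        sum_le_sum fun i hi => by
          nlinarith [mul_le_mul_of_nonneg_left (hf _ (hx i hi)) (hφ i hi)]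
    _ = c * ∑ i ∈ s, φ i + β * (∑ i ∈ s, φ i * x i - t * ∑ i ∈ s, φ i) := by
        rw [sum_add_distrib, ← mul_sum, ← mul_sum, sum_sub_distrib, ← mul_sum]
    _ = c := by rw [hφ1, hφx]; ring

lemma cost_indicator (u : Fin 2 → A → ℝ) (ω₀ : Fin 2) :
    Cost u (fun ω => if ω = ω₀ then 1 else 0) = 0 := by
  simp [Cost, uStar]

lemma cost_eq_zero_of_forall_eq_uStar {u : Fin 2 → A → ℝ} {a₀ : A}
    (ha₀ : ∀ ω, u ω a₀ = uStar u ω) {η : Fin 2 → ℝ} (hη : ∀ ω, 0 ≤ η ω) : Cost u η = 0 := by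
  have hle : univ.sup' univ_nonempty (fun a => ∑ ω, η ω * u ω a) ≤ ∑ ω, η ω * uStar u ω :=
    sup'_le _ _ fun a _ => sum_le_sum fun ω _ =>
      mul_le_mul_of_nonneg_left (le_sup' (u ω) (mem_univ a)) (hη ω)
  have hge : ∑ ω, η ω * uStar u ω ≤ univ.sup' univ_nonempty (fun a => ∑ ω, η ω * u ω a) := by
    simpa only [ha₀] using le_sup' (fun a => ∑ ω, η ω * u ω a) (mem_univ a₀)
  rw [Cost, sub_eq_zero]
  exact le_antisymm hge hle

lemma univ_sup'_eq_max {a₀ a₁ : A} (huniv : (univ : Finset A) = {a₀, a₁}) (f : A → ℝ) :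
    univ.sup' univ_nonempty f = max (f a₀) (f a₁) := by
  rw [sup'_congr univ_nonempty huniv fun _ _ => rfl]
  simp [sup'_insert]

lemma cost_eq_min_of_card_eq_two (hA : Fintype.card A = 2) (u : Fin 2 → A → ℝ) :
    ∃ a b : ℝ, 0 ≤ a ∧ 0 ≤ b ∧ ∀ η ∈ simplex 2, Cost u η = min (a * η 0) (b * η 1) := by
  obtain ⟨a₀, -, ha₀⟩ := exists_mem_eq_sup' univ_nonempty (u 0)
  obtain ⟨a₁, -, ha₁⟩ := exists_mem_eq_sup' univ_nonempty (u 1)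
  have e₀ : uStar u 0 = u 0 a₀ := ha₀
  have e₁ : uStar u 1 = u 1 a₁ := ha₁
  have hle : ∀ ω a, u ω a ≤ uStar u ω := fun ω a => le_sup' (u ω) (mem_univ a)
  by_cases h : a₀ = a₁
  · subst h
    refine ⟨0, 0, le_rfl, le_rfl, fun η hη => ?_⟩
    rw [zero_mul, zero_mul, min_self]
    exact cost_eq_zero_of_forall_eq_uStar (Fin.forall_fin_two.2 ⟨e₀.symm, e₁.symm⟩) hη.1
  · have huniv : (univ : Finset A) = {a₀, a₁} :=
      (eq_univ_of_card _ (by rw [card_pair h, hA])).symm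
    refine ⟨uStar u 0 - u 0 a₁, uStar u 1 - u 1 a₀, sub_nonneg.2 (hle 0 a₁),
      sub_nonneg.2 (hle 1 a₀), fun η _ => ?_⟩
    rw [Cost, univ_sup'_eq_max huniv, ← min_sub_sub_left, min_comm]
    simp only [Fin.sum_univ_two]
    congr 1
    · linear_combination η 1 * e₁
    · linear_combination η 0 * e₀

lemma ratio_eq (μ θ η : Fin 2 → ℝ) :
    Ratio μ θ η = μ 0 / θ 0 * η 0 + μ 1 / θ 1 * η 1 := by
  simp only [Ratio, Fin.sum_univ_two, mul_div_right_comm]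

/-- `R(η) C(η)` in the coordinate `x = η 0`, once `C` is written as the tent
`min (a η₀) (b η₁)` and `p = μ₀ / θ₀`, `q = μ₁ / θ₁`. -/
def tentObjective (p q a b x : ℝ) : ℝ := (p * x + q * (1 - x)) * min (a * x) (b * (1 - x))

lemma ratio_mul_cost_eq_tentObjective {u : Fin 2 → A → ℝ} {a b : ℝ}
    (hcost : ∀ η ∈ simplex 2, Cost u η = min (a * η 0) (b * η 1)) (μ θ : Fin 2 → ℝ)
    {η : Fin 2 → ℝ} (hη : η ∈ simplex 2) :
    Ratio μ θ η * Cost u η = tentObjective (μ 0 / θ 0) (μ 1 / θ 1) a b (η 0) := by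
  rw [ratio_eq, hcost η hη, simplex_two_one hη, tentObjective]

section TentObjective

variable {p q a b : ℝ}

lemma tentObjective_one_sub (p q a b x : ℝ) :
    tentObjective q p b a (1 - x) = tentObjective p q a b x := by
  rw [tentObjective, tentObjective, sub_sub_cancel, min_comm]
  ring

lemma tentObjective_zero (hb : 0 ≤ b) : tentObjective p q a b 0 = 0 := by
  simp [tentObjective, hb]

lemma tentObjective_le_tangent (hq : 0 ≤ q) (hpq : q ≤ p) (hb : 0 ≤ b) {x : ℝ}
    (hx : x ∈ Set.Icc 0 1) (t : ℝ) :
    tentObjective p q a b x ≤ (p * t + q * (1 - t)) * (b * (1 - t))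
      + b * ((p - q) * (1 - t) - (p * t + q * (1 - t))) * (x - t) :=
  calc tentObjective p q a b x ≤ (p * x + q * (1 - x)) * (b * (1 - x)) :=
        mul_le_mul_of_nonneg_left (min_le_right _ _) (by nlinarith [hx.1, hx.2])
    _ ≤ _ := by nlinarith [mul_nonneg (mul_nonneg hb (sub_nonneg.2 hpq)) (sq_nonneg (x - t))]

lemma tentObjective_le_chord (hq : 0 ≤ q) (hpq : q ≤ p) (ha : 0 ≤ a) (hb : 0 ≤ b) {X : ℝ}
    (hX0 : 0 ≤ X) (hX : a * X = b * (1 - X)) {x : ℝ} (hx : x ∈ Set.Icc 0 1) :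
    tentObjective p q a b x ≤ a * (p * X + q * (1 - X)) * x := by
  have hh : 0 ≤ p * x + q * (1 - x) := by nlinarith [hx.1, hx.2]
  rcases le_total x X with hxX | hXx
  · calc tentObjective p q a b x ≤ (p * x + q * (1 - x)) * (a * x) :=
          mul_le_mul_of_nonneg_left (min_le_left _ _) hh
      _ ≤ _ := by
        nlinarith [mul_nonneg (mul_nonneg ha hx.1)
          (mul_nonneg (sub_nonneg.2 hpq) (sub_nonneg.2 hxX))]
  · have hgap : a * (p * X + q * (1 - X)) * x - (p * x + q * (1 - x)) * (b * (1 - x))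
        = (a + b) * (x - X) * (q + (p - q) * X * x) := by
      linear_combination (q + (p - q) * x - (p - q) * x ^ 2 + (p - q) * X * x) * hX
    calc tentObjective p q a b x ≤ (p * x + q * (1 - x)) * (b * (1 - x)) :=
          mul_le_mul_of_nonneg_left (min_le_right _ _) hh
      _ ≤ _ := by
        linarith [hgap, mul_nonneg (mul_nonneg (add_nonneg ha hb) (sub_nonneg.2 hXx))
          (add_nonneg hq (mul_nonneg (mul_nonneg (sub_nonneg.2 hpq) hX0) hx.1))]

lemma exists_supporting_line_of_le (hq : 0 ≤ q) (hpq : q ≤ p) (ha : 0 ≤ a) (hb : 0 ≤ b)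
    {t : ℝ} (ht : t ∈ Set.Icc 0 1) :
    ∃ y w β : ℝ, y ∈ Set.Icc 0 1 ∧ w ∈ Set.Icc 0 1 ∧ w * y = t ∧
      ∀ x ∈ Set.Icc (0 : ℝ) 1,
        tentObjective p q a b x ≤ w * tentObjective p q a b y + β * (x - t) := by
  by_cases hfalling : b * (1 - t) ≤ a * t
  · refine ⟨t, 1, b * ((p - q) * (1 - t) - (p * t + q * (1 - t))), ht, ⟨zero_le_one, le_rfl⟩,
      one_mul t, fun x hx => ?_⟩
    have hvalue : tentObjective p q a b t = (p * t + q * (1 - t)) * (b * (1 - t)) := by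
      rw [tentObjective, min_eq_right hfalling]
    rw [one_mul, hvalue]
    exact tentObjective_le_tangent hq hpq hb hx t
  · rw [not_le] at hfalling
    have hb0 : 0 < b := by nlinarith [ht.1, ht.2]
    obtain ⟨X, hXdef⟩ : ∃ X, X = b / (a + b) := ⟨_, rfl⟩
    have hab : 0 < a + b := by linarith
    have hX : a * X = b * (1 - X) := by rw [hXdef]; field_simp; ring
    have hX0 : 0 < X := hXdef ▸ div_pos hb0 hab
    have htX : t ≤ X := by rw [hXdef, le_div_iff₀ hab]; linarith
    have hX1 : X ≤ 1 := hXdef ▸ div_le_one_of_le₀ (by linarith) hab.le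
    refine ⟨X, t / X, a * (p * X + q * (1 - X)), ⟨hX0.le, hX1⟩,
      ⟨div_nonneg ht.1 hX0.le, div_le_one_of_le₀ htX hX0.le⟩, div_mul_cancel₀ t hX0.ne',
      fun x hx => ?_⟩
    have hvalue : t / X * tentObjective p q a b X = a * (p * X + q * (1 - X)) * t := by
      rw [tentObjective, ← hX, min_self]
      field_simp
    rw [hvalue]
    linarith [tentObjective_le_chord hq hpq ha hb hX0.le hX hx]

lemma exists_vertex_supporting_line (hp : 0 ≤ p) (hq : 0 ≤ q) (ha : 0 ≤ a) (hb : 0 ≤ b)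
    {t : ℝ} (ht : t ∈ Set.Icc 0 1) :
    ∃ v y w β : ℝ, (v = 0 ∨ v = 1) ∧ y ∈ Set.Icc 0 1 ∧ w ∈ Set.Icc 0 1 ∧
      (1 - w) * v + w * y = t ∧ ∀ x ∈ Set.Icc (0 : ℝ) 1, tentObjective p q a b x ≤
        (1 - w) * tentObjective p q a b v + w * tentObjective p q a b y + β * (x - t) := by
  rcases le_total q p with hpq | hqp
  · obtain ⟨y, w, β, hy, hw, hwy, hline⟩ := exists_supporting_line_of_le hq hpq ha hb ht
    refine ⟨0, y, w, β, Or.inl rfl, hy, hw, by linear_combination hwy, ?_⟩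
    simpa only [tentObjective_zero hb, mul_zero, zero_add] using hline
  · obtain ⟨y, w, β, hy, hw, hwy, hline⟩ := exists_supporting_line_of_le hp hqp hb ha
      (t := 1 - t) ⟨by linarith [ht.2], by linarith [ht.1]⟩
    refine ⟨1, 1 - y, w, -β, Or.inr rfl, ⟨by linarith [hy.2], by linarith [hy.1]⟩, hw,
      by linear_combination -hwy, fun x hx => ?_⟩
    have h := hline (1 - x) ⟨by linarith [hx.2], by linarith [hx.1]⟩
    rw [tentObjective_one_sub] at h
    rw [← tentObjective_one_sub p q a b 1, ← tentObjective_one_sub p q a b (1 - y), sub_self,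
      sub_sub_cancel, tentObjective_zero ha]
    linarith

end TentObjective

lemma two_point_mem_concaveSet {u : Fin 2 → A → ℝ} {μ θ ηs ηt : Fin 2 → ℝ} {φs φt : ℝ}
    (hφs : 0 ≤ φs) (hφt : 0 ≤ φt) (hηs : ηs ∈ simplex 2) (hηt : ηt ∈ simplex 2)
    (hθ : ∀ ω, φs * ηs ω + φt * ηt ω = θ ω) :
    φs * Ratio μ θ ηs * Cost u ηs + φt * Ratio μ θ ηt * Cost u ηt ∈ ConcaveSet u μ θ :=
  ⟨2, ![φs, φt], ![ηs, ηt], Fin.forall_fin_two.2 ⟨hφs, hφt⟩, Fin.forall_fin_two.2 ⟨hηs, hηt⟩,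
    fun ω => by simpa [Fin.sum_univ_two] using hθ ω, by simp [Fin.sum_univ_two]⟩

lemma concaveSet_le {u : Fin 2 → A → ℝ} {μ θ : Fin 2 → ℝ} {g : ℝ → ℝ} {c β : ℝ}
    (hθ : θ ∈ simplex 2) (hg : ∀ η ∈ simplex 2, Ratio μ θ η * Cost u η = g (η 0))
    (hline : ∀ x ∈ Set.Icc (0 : ℝ) 1, g x ≤ c + β * (x - θ 0)) :
    c ∈ upperBounds (ConcaveSet u μ θ) := by
  rintro _ ⟨m, φ, η, hφ, hη, hφη, rfl⟩
  simp_rw [mul_assoc, hg _ (hη _)]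
  exact sum_mul_le_of_le_affine univ hline (fun s _ => hφ s)
    (fun s _ => simplex_two_zero_mem_Icc (hη s)) (sum_weights_eq_one hη hθ hφη) (hφη 0)

lemma vec_eq_indicator {v : ℝ} (hv : v = 0 ∨ v = 1) :
    ∃ ω₀ : Fin 2, ![v, 1 - v] = fun ω => if ω = ω₀ then 1 else 0 := by
  rcases hv with rfl | rfl
  · exact ⟨1, by ext ω; fin_cases ω <;> simp⟩
  · exact ⟨0, by ext ω; fin_cases ω <;> simp⟩

theorem stmt14_general (hA : Fintype.card A = 2) (u : Fin 2 → A → ℝ)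
    (μ θ : Fin 2 → ℝ) (hμ : μ ∈ simplex 2) (hθ : θ ∈ simplex 2) :
    ∃ (φs φt : ℝ) (ηs ηt : Fin 2 → ℝ),
      0 ≤ φs ∧ 0 ≤ φt ∧ ηs ∈ simplex 2 ∧ ηt ∈ simplex 2 ∧
      (∀ ω, φs * ηs ω + φt * ηt ω = θ ω) ∧
      φs * Ratio μ θ ηs * Cost u ηs + φt * Ratio μ θ ηt * Cost u ηt =
        sSup (ConcaveSet u μ θ) ∧
      (ηs = (fun ω => if ω = 0 then 1 else 0) ∨
        ηs = (fun ω => if ω = 1 then 1 else 0)) ∧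
      Cost u ηs = 0 := by
  obtain ⟨a, b, ha, hb, hcost⟩ := cost_eq_min_of_card_eq_two hA u
  set g := tentObjective (μ 0 / θ 0) (μ 1 / θ 1) a b
  have hg : ∀ η ∈ simplex 2, Ratio μ θ η * Cost u η = g (η 0) := fun η hη =>
    ratio_mul_cost_eq_tentObjective hcost μ θ hη
  obtain ⟨v, y, w, β, hv, hy, hw, hwt, hline⟩ := exists_vertex_supporting_line
    (div_nonneg (hμ.1 0) (hθ.1 0)) (div_nonneg (hμ.1 1) (hθ.1 1)) ha hb
    (simplex_two_zero_mem_Icc hθ)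
  obtain ⟨ω₀, hvω₀⟩ := vec_eq_indicator hv
  have hηs := vec_mem_simplex_two (show v ∈ Set.Icc 0 1 by rcases hv with rfl | rfl <;> simp)
  have hηt := vec_mem_simplex_two hy
  have hfeas : ∀ ω, (1 - w) * ![v, 1 - v] ω + w * ![y, 1 - y] ω = θ ω := by
    rw [Fin.forall_fin_two]
    exact ⟨by simpa using hwt, by simp [simplex_two_one hθ, ← hwt]; ring⟩
  have hvalue : (1 - w) * Ratio μ θ ![v, 1 - v] * Cost u ![v, 1 - v]
      + w * Ratio μ θ ![y, 1 - y] * Cost u ![y, 1 - y]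
      = (1 - w) * g v + w * g y := by
    rw [mul_assoc, mul_assoc, hg _ hηs, hg _ hηt]
    rfl
  have hmax : IsGreatest (ConcaveSet u μ θ) _ :=
    ⟨two_point_mem_concaveSet (sub_nonneg.2 hw.2) hw.1 hηs hηt hfeas,
      hvalue ▸ concaveSet_le hθ hg hline⟩
  refine ⟨1 - w, w, _, _, sub_nonneg.2 hw.2, hw.1, hηs, hηt, hfeas, hmax.csSup_eq.symm, ?_, ?_⟩
  · rw [hvω₀]
    fin_cases ω₀ <;> simp
  · rw [hvω₀]
    exact cost_indicator u ω₀

/-- for binary state and binary action, the supremum of the single-type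
problem is attained by a family of at most two posteriors `{η^s, η^t}` in which `η^s`
is a point mass, so `C(η^s) = 0`: upon receiving signal `s` the buyer learns the state
exactly and is charged price `p_s = 0`. -/
theorem stmt14 (hA : Fintype.card A = 2) (u : Fin 2 → A → ℝ)
    (μ θ : Fin 2 → ℝ) (hμ : μ ∈ simplex 2) (hθ : θ ∈ simplex 2)
    (hθpos : ∀ ω, 0 < θ ω) :
    ∃ (φs φt : ℝ) (ηs ηt : Fin 2 → ℝ),
      0 ≤ φs ∧ 0 ≤ φt ∧ ηs ∈ simplex 2 ∧ ηt ∈ simplex 2 ∧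
      (∀ ω, φs * ηs ω + φt * ηt ω = θ ω) ∧
      φs * Ratio μ θ ηs * Cost u ηs + φt * Ratio μ θ ηt * Cost u ηt =
        sSup (ConcaveSet u μ θ) ∧
      (ηs = (fun ω => if ω = 0 then 1 else 0) ∨
        ηs = (fun ω => if ω = 1 then 1 else 0)) ∧
      Cost u ηs = 0 :=
  stmt14_general hA u μ θ hμ hθ

end
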